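/- arXiv:2209.08029 — 2 statements merged into one kernel-verified Lean document; each statement's English description precedes it below -/
import Mathlib

section
/- Let G be a finite simple graph and S ⊆ V(G). Let K_1, …, K_s be the nonempty independent subsets of the induced subgraph G[S]. Then I(G - S, x) - I(G, x) = Σ_{i=1}^{s} (Π_{v ∈ K_i} x_v) · I(G - N_G[K_i], x), where N_G[K] = K ∪ (∪_{v∈K} N_G(v)). -/
/-- `S` is an independent set of `G`. -/
def IsIndepSet {W : Type*} (G : SimpleGraph W) (S : Set W) : Prop :=
  ∀ u ∈ S, ∀ v ∈ S, ¬ G.Adj u v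

open Classical in
/-- The multivariate independence polynomial of the induced subgraph `G - T`
(sum over independent sets avoiding `T`), viewed in `ℂ[x_v : v ∈ V(G)]`. -/
noncomputable def Iav {W : Type*} [Fintype W] (G : SimpleGraph W) (T : Set W) :
    MvPolynomial W ℂ :=
  ∑ S ∈ Finset.univ.filter
      (fun S : Finset W => IsIndepSet G ↑S ∧ ∀ x ∈ S, x ∉ T),
    (-1 : MvPolynomial W ℂ) ^ S.card * ∏ v ∈ S, MvPolynomial.X v

/-- The closed neighborhood `N_G[K]` of a set `K`. -/
def closedNbhd {W : Type*} (G : SimpleGraph W) (K : Set W) : Set W :=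
  K ∪ {z | ∃ w ∈ K, G.Adj w z}

/-!
Expanding `I(G - N_G[K])` and multiplying by `x^K`, the right-hand side becomes a sum over pairs
`(K, A)` with `A` independent and `∅ ≠ K ⊆ A ∩ S`, weighted by `(-1)^{|A|+|K|} x^A`. For fixed `A`
the alternating sum over the nonempty `K ⊆ A ∩ S` is `-1` when `A` meets `S` and empty otherwise,
which leaves minus the sum over the independent sets meeting `S`, i.e. `I(G - S) - I(G)`.
-/

open Finset MvPolynomial

namespace IsIndepSet

variable {W : Type*} {G : SimpleGraph W}

lemma mono {s t : Set W} (ht : IsIndepSet G t) (hst : s ⊆ t) : IsIndepSet G s :=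
  fun u hu v hv => ht u (hst hu) v (hst hv)

lemma union_of_disjoint_closedNbhd {K B : Set W} (hK : IsIndepSet G K) (hB : IsIndepSet G B)
    (hBK : Disjoint B (closedNbhd G K)) : IsIndepSet G (K ∪ B) := by
  have hnbr : ∀ ⦃u v⦄, u ∈ K → v ∈ B → ¬ G.Adj u v := fun u v hu hv huv =>
    Set.disjoint_left.1 hBK hv (Or.inr ⟨u, hu, huv⟩)
  rintro u (hu | hu) v (hv | hv) huv
  exacts [hK u hu v hv huv, hnbr hu hv huv, hnbr hv hu huv.symm, hB u hu v hv huv]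

lemma disjoint_closedNbhd_diff {A K : Set W} (hA : IsIndepSet G A) (hKA : K ⊆ A) :
    Disjoint (A \ K) (closedNbhd G K) := by
  rw [Set.disjoint_left]
  rintro v ⟨hvA, hvK⟩ (hv | ⟨u, hu, huv⟩)
  exacts [hvK hv, hA u (hKA hu) v hvA huv]

end IsIndepSet

lemma sum_powerset_filter_nonempty_neg_one_pow {α R : Type*} [CommRing R] {M : Finset α}
    (hM : M.Nonempty) : ∑ K ∈ M.powerset.filter Finset.Nonempty, (-1 : R) ^ K.card = -1 := by
  classical
  have hsum : ∑ K ∈ M.powerset, (-1 : R) ^ K.card = 0 := by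
    exact_mod_cast congrArg (Int.cast : ℤ → R) (sum_powerset_neg_one_pow_card_of_nonempty hM)
  simp_rw [nonempty_iff_ne_empty, filter_ne', sum_erase_eq_sub (empty_mem_powerset M), hsum]
  simp

section

variable {W : Type*} [Fintype W] (G : SimpleGraph W)

open Classical in
lemma Iav_sub_Iav_empty (T : Set W) :
    Iav G T - Iav G ∅ =
      -∑ A ∈ univ.filter (fun A : Finset W => IsIndepSet G ↑A ∧ ((A : Set W) ∩ T).Nonempty),
        (-1 : MvPolynomial W ℂ) ^ A.card * ∏ v ∈ A, X v := by
  have hsplit := sum_filter_add_sum_filter_not (univ.filter (fun A : Finset W => IsIndepSet G ↑A))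
    (fun A => ((A : Set W) ∩ T).Nonempty)
    (fun A => (-1 : MvPolynomial W ℂ) ^ A.card * ∏ v ∈ A, X v)
  simp only [filter_filter, Set.not_nonempty_iff_eq_empty, ← Set.disjoint_iff_inter_eq_empty,
    Set.disjoint_left, mem_coe] at hsplit
  simp only [Iav, Set.mem_empty_iff_false, not_false_eq_true, implies_true, and_true, ← hsplit]
  abel

open Classical in
lemma prod_X_mul_Iav_closedNbhd {K : Finset W} (hK : IsIndepSet G ↑K) :
    (∏ v ∈ K, X v) * Iav G (closedNbhd G ↑K) =
      ∑ A ∈ univ.filter (fun A : Finset W => IsIndepSet G ↑A ∧ K ⊆ A),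
        (-1 : MvPolynomial W ℂ) ^ A.card * (-1) ^ K.card * ∏ v ∈ A, X v := by
  have hdisj : ∀ {B : Finset W}, (∀ v ∈ B, v ∉ closedNbhd G ↑K) → Disjoint K B := fun hB =>
    disjoint_coe.1 ((Set.disjoint_left.2 hB).mono_right Set.subset_union_left).symm
  rw [Iav, mul_sum]
  refine sum_nbij' (K ∪ ·) (· \ K) ?_ ?_ ?_ ?_ ?_
  · simp only [mem_filter, mem_univ, true_and]
    rintro B ⟨hB, hBK⟩
    refine ⟨?_, subset_union_left⟩
    rw [coe_union]
    exact hK.union_of_disjoint_closedNbhd hB (Set.disjoint_left.2 hBK)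
  · simp only [mem_filter, mem_univ, true_and]
    rintro A ⟨hA, hKA⟩
    rw [← coe_subset] at hKA
    refine ⟨?_, Set.disjoint_left.1 ?_⟩ <;> rw [coe_sdiff]
    exacts [hA.mono Set.sdiff_subset, hA.disjoint_closedNbhd_diff hKA]
  · rintro B hB
    exact union_sdiff_cancel_left (hdisj (mem_filter.1 hB).2.2)
  · rintro A hA
    exact union_sdiff_of_subset (mem_filter.1 hA).2.2
  · rintro B hB
    have hKB := hdisj (mem_filter.1 hB).2.2
    have hsq : (-1 : MvPolynomial W ℂ) ^ K.card * (-1) ^ K.card = 1 := by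
      rw [← mul_pow]; simp
    rw [card_union_of_disjoint hKB, prod_union hKB, pow_add]
    linear_combination (-(-1 : MvPolynomial W ℂ) ^ B.card * (∏ v ∈ K, X v) * ∏ v ∈ B, X v) * hsq

open Classical in
theorem Iav_sub_Iav_empty_eq_sum (S : Finset W) :
    Iav G ↑S - Iav G ∅ =
      ∑ K ∈ S.powerset.filter (fun K : Finset W => K.Nonempty ∧ IsIndepSet G ↑K),
        (∏ v ∈ K, X v) * Iav G (closedNbhd G ↑K) := by
  rw [Iav_sub_Iav_empty,
    sum_congr rfl fun K hK => prod_X_mul_Iav_closedNbhd G (mem_filter.1 hK).2.2,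
    sum_comm' (s' := fun A => (A ∩ S).powerset.filter Finset.Nonempty) ?_, ← sum_neg_distrib]
  · refine sum_congr rfl fun A hA => ?_
    obtain ⟨v, hvA, hvS⟩ := (mem_filter.1 hA).2.2
    rw [← sum_mul, ← mul_sum, sum_powerset_filter_nonempty_neg_one_pow ⟨v, mem_inter.2 ⟨hvA, hvS⟩⟩]
    ring
  · intro K A
    simp only [mem_filter, mem_powerset, mem_univ, true_and, subset_inter_iff]
    constructor
    · rintro ⟨⟨hKS, ⟨v, hv⟩, -⟩, hA, hKA⟩
      exact ⟨⟨⟨hKA, hKS⟩, ⟨v, hv⟩⟩, hA, v, hKA hv, hKS hv⟩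
    · rintro ⟨⟨⟨hKA, hKS⟩, hK⟩, hA, -⟩
      exact ⟨⟨hKS, hK, hA.mono (coe_subset.2 hKA)⟩, hA, hKA⟩

end

open Classical in
theorem stmt_2_general {V : Type*} [Fintype V] (G : SimpleGraph V)
    (S : Finset V) :
    Iav G (↑S : Set V) - Iav G (∅ : Set V) =
      ∑ K ∈ S.powerset.filter (fun K => K.Nonempty ∧ IsIndepSet G ↑K),
        (∏ v ∈ K, MvPolynomial.X v) * Iav G (closedNbhd G ↑K) := by
  -- The binder `K` above elaborates as a `Set V`: the sum runs over the image of `S.powerset`.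
  rw [show (S.powerset >>= fun K => pure (K : Set V)) = S.powerset.image (↑) from
      sup_singleton_apply _ _, filter_image, sum_image fun _ _ _ _ h => coe_injective h]
  simpa using Iav_sub_Iav_empty_eq_sum G S

open Classical in
/-- The multivariate fundamental identity: for `S ⊆ V(G)`,
`I(G-S,x) - I(G,x) = Σ_K (Π_{v∈K} x_v) I(G - N_G[K], x)`, where `K` runs over the
nonempty independent subsets of the induced subgraph `G[S]`. -/
theorem stmt_2 {V : Type*} [Fintype V] [DecidableEq V] (G : SimpleGraph V)
    (S : Finset V) :
    Iav G (↑S : Set V) - Iav G (∅ : Set V) =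
      ∑ K ∈ S.powerset.filter (fun K => K.Nonempty ∧ IsIndepSet G ↑K),
        (∏ v ∈ K, MvPolynomial.X v) * Iav G (closedNbhd G ↑K) :=
  stmt_2_general G S
end

section
/- Let G be a finite simple connected graph with a fixed total order on V(G), u ∈ V(G), and (T_G, u') its stable-path tree rooted at u with labeling ℓ_G : V(T_G) → V(G). Then the multivariate Godsil identity holds: I(G - u, x) · ℓ_G(I(T_G, x)) = I(G, x) · ℓ_G(I(T_G - u', x)), where ℓ_G applied to a polynomial in variables {x_w : w ∈ V(T_G)} substitutes x_w ↦ x_{ℓ_G(w)}. -/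
/-!
Write `I(A)` for the independence polynomial of `G[A]` (that is, `Iav G Aᶜ`) and, for the
stable-path tree `T` of `x` inside an available vertex set `B`, write `Pₙ` for
`ℓ(I(T − {paths with at most n vertices}))`. Deleting the root gives `P₀ = P₁ − x_x P₂`, and
removing the top level of `T` leaves the disjoint union of the subtrees of the children
`w₁ < ⋯ < w_d`, so `Pₙ₊₁ = ∏ᵢ Pₙ(Gᵢ, wᵢ)`. On the graph side `I(B) = I(B − x) − x_x I(B − N[x])`.
Since `Gᵢ` is a component of `Dᵢ = B − x − {w₁, …, wᵢ₋₁}`, induction on `B` gives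
`I(Dᵢ) P₁(Gᵢ) = I(Dᵢ − wᵢ) P₀(Gᵢ)`, and as `Dᵢ − wᵢ = Dᵢ₊₁` these telescope to
`I(B − x) ∏ P₁(Gᵢ) = I(B − N[x]) ∏ P₀(Gᵢ)`. The three recursions combine to
`I(B − x) P₀ = I(B) P₁`, which for `B = V(G)` is the theorem.
-/

/-- The set of vertices reachable from `w` by walks of `G` staying inside `B`
(the connected component of `w` in the induced subgraph `G[B]`). -/
def compIn {V : Type*} (G : SimpleGraph V) (B : Set V) (w : V) : Set V :=
  {y | ∃ p : G.Walk w y, ∀ z ∈ p.support, z ∈ B}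

/-- Given the available vertex set `B`, the current vertex `x` and a chosen
neighbour `w`, the vertex set of the connected component `G_i` of
`G[B] − ({x} ∪ {smaller neighbours of x})` containing `w`. -/
def nextSet {V : Type*} [LinearOrder V] (G : SimpleGraph V) (B : Set V) (x w : V) :
    Set V :=
  compIn G (B \ ({x} ∪ {z ∈ B | G.Adj x z ∧ z < w})) w

/-- `sptFrom G B x rest` says that `rest` is a valid continuation of a stable path
currently ending at `x`, with available vertex set `B`. -/
def sptFrom {V : Type*} [LinearOrder V] (G : SimpleGraph V) :
    Set V → V → List V → Prop
  | _, _, [] => True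
  | B, x, w :: rest => G.Adj x w ∧ w ∈ B ∧ sptFrom G (nextSet G B x w) w rest

/-- `p` is a stable path of `G` starting at `u`. -/
def StablePath {V : Type*} [LinearOrder V] (G : SimpleGraph V) (u : V)
    (p : List V) : Prop :=
  ∃ rest, p = u :: rest ∧ sptFrom G Set.univ u rest

/-- The vertex set of the stable-path tree `T_G` rooted at `u`: stable paths
starting at `u` (all of which have pairwise distinct entries). -/
def SPVert {V : Type*} [LinearOrder V] (G : SimpleGraph V) (u : V) :=
  {p : List V // p.Nodup ∧ StablePath G u p}

noncomputable instance {V : Type*} [Fintype V] [DecidableEq V] [LinearOrder V]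
    (G : SimpleGraph V) (u : V) : Fintype (SPVert G u) :=
  Fintype.ofInjective (fun p => (⟨p.1, p.2.1⟩ : {l : List V // l.Nodup}))
    (by rintro ⟨a, ha⟩ ⟨b, hb⟩ h; exact Subtype.ext (by simpa [Subtype.ext_iff] using h))

/-- The stable-path tree `T_G` of `G` rooted at `u`: a stable path is joined to
each of its one-step extensions. -/
def SPT {V : Type*} [LinearOrder V] (G : SimpleGraph V) (u : V) :
    SimpleGraph (SPVert G u) :=
  SimpleGraph.fromRel (fun p q => q.1.length = p.1.length + 1 ∧ p.1 <+: q.1)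

/-- The root `u'` of the stable-path tree. -/
def SPTroot {V : Type*} [LinearOrder V] (G : SimpleGraph V) (u : V) : SPVert G u :=
  ⟨[u], by simp, ⟨[], rfl, trivial⟩⟩

/-- The labeling map `ℓ_G : V(T_G) → V(G)` sending a stable path to its last vertex. -/
def SPTlabel {V : Type*} [LinearOrder V] {G : SimpleGraph V} {u : V}
    (p : SPVert G u) : V :=
  p.1.getLast (by obtain ⟨-, rest, h, -⟩ := p.2; simp [h])

open MvPolynomial

section IndependencePolynomial

variable {W : Type*} [Fintype W] (H : SimpleGraph W)

open Classical in
noncomputable def indepFinsets (T : Set W) : Finset (Finset W) :=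
  Finset.univ.filter (fun S : Finset W => IsIndepSet H ↑S ∧ ∀ x ∈ S, x ∉ T)

variable {H} in
@[simp]
theorem mem_indepFinsets {T : Set W} {S : Finset W} :
    S ∈ indepFinsets H T ↔ IsIndepSet H ↑S ∧ ∀ x ∈ S, x ∉ T := by
  simp [indepFinsets]

theorem Iav_eq_sum (T : Set W) : Iav H T = ∑ S ∈ indepFinsets H T, ∏ v ∈ S, -X v := by
  simp only [Iav, indepFinsets, Finset.prod_neg]

theorem Iav_univ : Iav H Set.univ = 1 := by
  rw [Iav_eq_sum, Finset.sum_eq_single ∅]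
  · simp
  · intro S hS hne
    obtain ⟨a, ha⟩ := Finset.nonempty_iff_ne_empty.2 hne
    exact absurd (Set.mem_univ a) ((mem_indepFinsets.1 hS).2 a ha)
  · simp [IsIndepSet]

theorem Iav_eq_sub_X_mul {T : Set W} {a : W} (ha : a ∉ T) :
    Iav H T = Iav H (insert a T) - X a * Iav H (insert a T ∪ H.neighborSet a) := by
  classical
  simp only [Iav_eq_sum]
  rw [← Finset.sum_filter_add_sum_filter_not _ (a ∈ ·), sub_eq_add_neg, add_comm, Finset.mul_sum,
    ← Finset.sum_neg_distrib]
  congr 1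
  · refine Finset.sum_congr ?_ fun _ _ => rfl
    ext S
    simp only [Finset.mem_filter, mem_indepFinsets, Set.mem_insert_iff, not_or]
    grind
  · refine Finset.sum_nbij' (·.erase a) (insert a) ?_ ?_ ?_ ?_ ?_
    · intro S hS
      simp only [Finset.mem_filter, mem_indepFinsets, IsIndepSet, Finset.coe_erase,
        Finset.mem_erase, Set.mem_sdiff, Finset.mem_coe, Set.mem_union, Set.mem_insert_iff,
        SimpleGraph.mem_neighborSet] at hS ⊢
      grind
    · intro S hS
      simp only [Finset.mem_filter, mem_indepFinsets, IsIndepSet, Finset.coe_insert,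
        Finset.mem_insert, Set.mem_insert_iff, Finset.mem_coe, Set.mem_union,
        SimpleGraph.mem_neighborSet] at hS ⊢
      grind [SimpleGraph.Adj.symm, SimpleGraph.irrefl]
    · intro S hS
      exact Finset.insert_erase (Finset.mem_filter.1 hS).2
    · intro S hS
      exact Finset.erase_insert fun h => (mem_indepFinsets.1 hS).2 a h (Or.inl (Set.mem_insert a T))
    · intro S hS
      rw [← Finset.mul_prod_erase _ _ (Finset.mem_filter.1 hS).2, neg_mul]

theorem Iav_eq_mul {T A B : Set W} (hT : Tᶜ = A ∪ B) (hAB : Disjoint A B)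
    (hadj : ∀ a ∈ A, ∀ b ∈ B, ¬H.Adj a b) : Iav H T = Iav H Aᶜ * Iav H Bᶜ := by
  classical
  rw [Iav_eq_sum, Iav_eq_sum, Iav_eq_sum, Finset.sum_mul_sum, ← Finset.sum_product']
  have hT' : ∀ x, x ∉ T ↔ x ∈ A ∨ x ∈ B := fun x => by
    rw [← Set.mem_compl_iff, hT, Set.mem_union]
  have hAB' : ∀ x ∈ A, x ∉ B := fun x hA hB => Set.disjoint_left.1 hAB hA hB
  symm
  refine Finset.sum_nbij' (fun P => P.1 ∪ P.2) (fun S => (S.filter (· ∈ A), S.filter (· ∈ B)))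
    ?_ ?_ ?_ ?_ ?_
  · rintro ⟨S₁, S₂⟩ h
    simp only [Finset.mem_product, mem_indepFinsets, IsIndepSet, Set.mem_compl_iff, not_not,
      Finset.coe_union, Set.mem_union, Finset.mem_coe, Finset.mem_union] at h ⊢
    grind [SimpleGraph.Adj.symm]
  · intro S h
    simp only [Finset.mem_product, mem_indepFinsets, IsIndepSet, Set.mem_compl_iff, not_not,
      Finset.coe_filter, Set.mem_ofPred_eq, Finset.mem_filter, Finset.mem_coe] at h ⊢
    grind
  · rintro ⟨S₁, S₂⟩ h
    simp only [Finset.mem_product, mem_indepFinsets, Set.mem_compl_iff, not_not] at h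
    ext x <;> simp only [Finset.mem_filter, Finset.mem_union] <;> grind
  · intro S h
    simp only [mem_indepFinsets] at h
    ext x; simp only [Finset.mem_filter, Finset.mem_union]; grind
  · rintro ⟨S₁, S₂⟩ h
    simp only [Finset.mem_product, mem_indepFinsets, Set.mem_compl_iff, not_not] at h
    exact (Finset.prod_union (Finset.disjoint_left.2 fun x h₁ h₂ =>
      hAB' x (h.1.2 x h₁) (h.2.2 x h₂))).symm

theorem Iav_eq_prod {ι : Type*} [DecidableEq ι] (s : Finset ι) (A : ι → Set W) {T : Set W}
    (hT : Tᶜ = ⋃ i ∈ s, A i) (hdisj : (s : Set ι).PairwiseDisjoint A)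
    (hadj : ∀ i ∈ s, ∀ j ∈ s, i ≠ j → ∀ a ∈ A i, ∀ b ∈ A j, ¬H.Adj a b) :
    Iav H T = ∏ i ∈ s, Iav H (A i)ᶜ := by
  induction s using Finset.induction_on generalizing T with
  | empty =>
    rw [Finset.prod_empty, ← compl_compl T, hT]
    simpa using Iav_univ H
  | insert i s hi ih =>
    rw [Finset.prod_insert hi, ← ih (compl_compl _) (hdisj.subset (by simp))
      (fun j hj k hk => hadj j (by simp [hj]) k (by simp [hk]))]
    refine Iav_eq_mul H (by rw [hT, Finset.set_biUnion_insert]) ?_ ?_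
    · exact Set.disjoint_iUnion₂_right.2 fun j hj =>
        hdisj (by simp) (by simp [hj]) (fun h => hi (h ▸ hj))
    · simp only [Set.mem_iUnion]
      rintro a ha b ⟨j, hj, hb⟩
      exact hadj i (by simp) j (by simp [hj]) (fun h => hi (h ▸ hj)) a ha b hb

variable {H} in
theorem rename_Iav {W' : Type*} [Fintype W'] {H' : SimpleGraph W'} (f : H' ↪g H) (T' : Set W') :
    rename f (Iav H' T') = Iav H (f '' T'ᶜ)ᶜ := by
  classical
  simp only [Iav_eq_sum, map_sum, map_prod, map_neg, rename_X]
  refine Finset.sum_nbij' (·.map f.toEmbedding) (·.preimage f f.injective.injOn) ?_ ?_ ?_ ?_ ?_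
  · intro S h
    simpa [IsIndepSet] using h
  · intro S h
    obtain ⟨hS, hT⟩ := mem_indepFinsets.1 h
    simp only [mem_indepFinsets, IsIndepSet, Set.mem_compl_iff, not_not] at hT ⊢
    simp only [Finset.coe_preimage, Set.mem_preimage, Finset.mem_coe, Finset.mem_preimage]
    refine ⟨fun u hu v hv huv => hS _ hu _ hv (f.map_adj_iff.2 huv), fun x hx => ?_⟩
    obtain ⟨y, hy, hyx⟩ := hT _ hx
    exact f.injective hyx ▸ hy
  · intro S _; ext; simp
  · intro S h
    ext x
    simp only [Finset.mem_map, Finset.mem_preimage, RelEmbedding.coe_toEmbedding]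
    refine ⟨fun ⟨a, ha, hax⟩ => hax ▸ ha, fun hx => ?_⟩
    obtain ⟨y, -, rfl⟩ := not_not.1 ((mem_indepFinsets.1 h).2 x hx)
    exact ⟨y, hx, rfl⟩
  · intro S _
    simp

end IndependencePolynomial

theorem Finset.mul_prod_telescope {α R : Type*} [LinearOrder α] [CommMonoid R] (s : Finset α)
    (g : Finset α → R) (p q : α → R)
    (h : ∀ a ∈ s, g (s.filter (· < a)) * q a = g (s.filter (· ≤ a)) * p a) :
    g ∅ * ∏ a ∈ s, q a = g s * ∏ a ∈ s, p a := by
  induction s using Finset.induction_on_max with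
  | empty => simp
  | insert a s ha ih =>
    have ha' : a ∉ s := fun h => lt_irrefl a (ha a h)
    have hfilter : ∀ b ∈ s, (insert a s).filter (· < b) = s.filter (· < b) ∧
        (insert a s).filter (· ≤ b) = s.filter (· ≤ b) := fun b hb => by
      have := ha b hb
      constructor <;> ext c <;> simp only [Finset.mem_filter, Finset.mem_insert] <;> grind
    have hstep := h a (Finset.mem_insert_self a s)
    rw [show (insert a s).filter (· < a) = s by ext c; simp; grind,
      show (insert a s).filter (· ≤ a) = insert a s by ext c; simp; grind] at hstep
    have ih := ih fun b hb => by
      simpa only [hfilter b hb] using h b (Finset.mem_insert_of_mem hb)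
    rw [Finset.prod_insert ha', Finset.prod_insert ha']
    calc g ∅ * (q a * ∏ b ∈ s, q b) = g s * q a * ∏ b ∈ s, p b := by
          rw [mul_left_comm, ih]; ac_rfl
      _ = g (insert a s) * (p a * ∏ b ∈ s, p b) := by rw [hstep, mul_assoc]

section ComponentSplitting

variable {V : Type*} (G : SimpleGraph V)

theorem compIn_subset (D : Set V) (w : V) : compIn G D w ⊆ D :=
  fun _ ⟨p, hp⟩ => hp _ p.end_mem_support

theorem mem_compIn_self {D : Set V} {w : V} (h : w ∈ D) : w ∈ compIn G D w :=
  ⟨.nil, by simpa using h⟩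

theorem mem_compIn_of_adj {D : Set V} {w y z : V} (hy : y ∈ compIn G D w) (hz : z ∈ D)
    (hadj : G.Adj y z) : z ∈ compIn G D w := by
  obtain ⟨p, hp⟩ := hy
  refine ⟨p.concat hadj, fun a ha => ?_⟩
  rw [SimpleGraph.Walk.support_concat, List.mem_append, List.mem_singleton] at ha
  exact ha.elim (hp a) (· ▸ hz)

variable [Fintype V]

open Classical in
noncomputable def nbrsIn (B : Set V) (x : V) : Finset V :=
  Finset.univ.filter (fun w => G.Adj x w ∧ w ∈ B)

@[simp]
theorem mem_nbrsIn {B : Set V} {x w : V} : w ∈ nbrsIn G B x ↔ G.Adj x w ∧ w ∈ B := by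
  simp [nbrsIn]

theorem Iav_compl_diff_eq_mul (D S : Set V) (w : V) :
    Iav G (D \ S)ᶜ = Iav G (compIn G D w \ S)ᶜ * Iav G ((D \ compIn G D w) \ S)ᶜ := by
  have hsub := compIn_subset G D w
  refine Iav_eq_mul G (by rw [compl_compl]; ext; simp; grind) ?_ ?_
  · exact Set.disjoint_left.2 fun a ha ha' => ha'.1.2 ha.1
  · exact fun a ha b hb hab => hb.1.2 (mem_compIn_of_adj G ha.1 hb.1.1 hab)

theorem Iav_mul_eq_of_compIn {D : Set V} {w : V} (hw : w ∈ D) {P Q : MvPolynomial V ℂ}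
    (h : Iav G (compIn G D w \ {w})ᶜ * P = Iav G (compIn G D w)ᶜ * Q) :
    Iav G Dᶜ * Q = Iav G (D \ {w})ᶜ * P := by
  have hD := Iav_compl_diff_eq_mul G D ∅ w
  have hDw := Iav_compl_diff_eq_mul G D {w} w
  rw [Set.sdiff_empty, Set.sdiff_empty, Set.sdiff_empty] at hD
  rw [Set.sdiff_singleton_eq_self (s := D \ compIn G D w) fun h => h.2 (mem_compIn_self G hw)]
    at hDw
  rw [hD, hDw]
  linear_combination (-Iav G (D \ compIn G D w)ᶜ) * h

end ComponentSplitting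

section StablePathTree

variable {V : Type*} [LinearOrder V] (G : SimpleGraph V)

theorem nextSet_subset (B : Set V) (x w : V) : nextSet G B x w ⊆ B \ {x} := fun _ hz => by
  have := compIn_subset G _ _ hz
  simp only [Set.mem_sdiff, Set.mem_union, not_or] at this ⊢
  exact ⟨this.1, this.2.1⟩

theorem mem_nextSet_self {B : Set V} {x w : V} (hadj : G.Adj x w) (hw : w ∈ B) :
    w ∈ nextSet G B x w :=
  mem_compIn_self G ⟨hw, by simp [hadj.ne']⟩

theorem mem_of_sptFrom {B : Set V} {x : V} {rest : List V} (h : sptFrom G B x rest) :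
    ∀ z ∈ rest, z ∈ B := by
  induction rest generalizing B x with
  | nil => simp
  | cons w r ih =>
    obtain ⟨-, hw, hr⟩ := h
    rintro z (_ | ⟨_, hz⟩)
    · exact hw
    · exact (nextSet_subset G B x w (ih hr z hz)).1

/-- The stable paths from `x` inside `B`. For `B = univ` this is `SPVert G x` by definition, and
`SPTIn`, `root` and `label` below unfold to `SPT`, `SPTroot` and `SPTlabel`. -/
abbrev SPVertIn (B : Set V) (x : V) : Type _ :=
  {p : List V // p.Nodup ∧ ∃ rest, p = x :: rest ∧ sptFrom G B x rest}

noncomputable instance [Fintype V] (B : Set V) (x : V) : Fintype (SPVertIn G B x) :=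
  Fintype.ofInjective (fun p => (⟨p.1, p.2.1⟩ : {l : List V // l.Nodup}))
    (by rintro ⟨a, ha⟩ ⟨b, hb⟩ h; exact Subtype.ext (by simpa [Subtype.ext_iff] using h))

def SPTIn (B : Set V) (x : V) : SimpleGraph (SPVertIn G B x) :=
  SimpleGraph.fromRel (fun p q => q.1.length = p.1.length + 1 ∧ p.1 <+: q.1)

namespace SPVertIn

variable {G} {B : Set V} {x w : V}

def root (G : SimpleGraph V) (B : Set V) (x : V) : SPVertIn G B x :=
  ⟨[x], by simp, [], rfl, trivial⟩

def label (p : SPVertIn G B x) : V :=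
  p.1.getLast (by obtain ⟨-, rest, h, -⟩ := p.2; simp [h])

theorem exists_val_eq_cons (p : SPVertIn G B x) : ∃ rest, p.1 = x :: rest :=
  p.2.2.imp fun _ h => h.1

theorem one_le_length (p : SPVertIn G B x) : 1 ≤ p.1.length := by
  obtain ⟨rest, h⟩ := p.exists_val_eq_cons
  simp [h]

theorem length_le_one_iff (p : SPVertIn G B x) : p.1.length ≤ 1 ↔ p = root G B x := by
  obtain ⟨rest, h⟩ := p.exists_val_eq_cons
  rw [Subtype.ext_iff, h]
  cases rest <;> simp [root]

theorem adj_root_iff (p : SPVertIn G B x) : (SPTIn G B x).Adj (root G B x) p ↔ p.1.length = 2 := by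
  obtain ⟨rest, h⟩ := p.exists_val_eq_cons
  simp only [SPTIn, SimpleGraph.fromRel_adj, root, h, List.length_cons, ne_eq, Subtype.ext_iff]
  cases rest <;> simp

def cons (hadj : G.Adj x w) (hw : w ∈ B) (p : SPVertIn G (nextSet G B x w) w) :
    SPVertIn G B x :=
  ⟨x :: p.1, by
    obtain ⟨hnd, rest, h, hs⟩ := p.2
    refine List.nodup_cons.2 ⟨fun hx => ?_, hnd⟩
    rw [h] at hx
    obtain rfl | hx := List.mem_cons.1 hx
    · exact hadj.ne rfl
    · exact (nextSet_subset G B x w (mem_of_sptFrom G hs x hx)).2 rfl,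
    p.1, rfl, by obtain ⟨-, rest, h, hs⟩ := p.2; rw [h]; exact ⟨hadj, hw, hs⟩⟩

@[simp]
theorem val_cons (hadj : G.Adj x w) (hw : w ∈ B) (p : SPVertIn G (nextSet G B x w) w) :
    (cons hadj hw p).1 = x :: p.1 := rfl

def consEmbedding (hadj : G.Adj x w) (hw : w ∈ B) :
    SPTIn G (nextSet G B x w) w ↪g SPTIn G B x where
  toFun := cons hadj hw
  inj' p q h := Subtype.ext (List.tail_eq_of_cons_eq (congrArg Subtype.val h))
  map_rel_iff' {p q} := by
    change (SPTIn G B x).Adj (cons hadj hw p) (cons hadj hw q) ↔ _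
    simp only [SPTIn, SimpleGraph.fromRel_adj, val_cons, List.length_cons, List.cons_prefix_cons,
      ne_eq, Subtype.ext_iff, List.cons.injEq]
    simp

@[simp]
theorem consEmbedding_apply (hadj : G.Adj x w) (hw : w ∈ B) (p : SPVertIn G (nextSet G B x w) w) :
    consEmbedding hadj hw p = cons hadj hw p := rfl


@[simp]
theorem label_root : label (root G B x) = x := rfl

@[simp]
theorem label_cons (hadj : G.Adj x w) (hw : w ∈ B) (p : SPVertIn G (nextSet G B x w) w) :
    label (cons hadj hw p) = label p :=
  List.getLast_cons _

theorem exists_cons_eq {p : SPVertIn G B x} (hp : 2 ≤ p.1.length) :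
    ∃ w, ∃ h : G.Adj x w ∧ w ∈ B, ∃ q, cons h.1 h.2 q = p := by
  obtain ⟨hnd, rest, hrest, hs⟩ := p.2
  obtain _ | ⟨w, r⟩ := rest
  · simp [hrest] at hp
  obtain ⟨hadj, hw, hr⟩ := hs
  rw [hrest] at hnd
  exact ⟨w, ⟨hadj, hw⟩, ⟨w :: r, (List.nodup_cons.1 hnd).2, r, rfl, hr⟩, Subtype.ext hrest.symm⟩

theorem eq_of_cons_eq_or_adj {w' : V} {h : G.Adj x w ∧ w ∈ B} {h' : G.Adj x w' ∧ w' ∈ B}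
    {p : SPVertIn G (nextSet G B x w) w} {q : SPVertIn G (nextSet G B x w') w'}
    (hpq : cons h.1 h.2 p = cons h'.1 h'.2 q ∨
      (SPTIn G B x).Adj (cons h.1 h.2 p) (cons h'.1 h'.2 q)) :
    w = w' := by
  obtain ⟨r, hr⟩ := p.exists_val_eq_cons
  obtain ⟨r', hr'⟩ := q.exists_val_eq_cons
  simp only [SPTIn, SimpleGraph.fromRel_adj, Subtype.ext_iff, val_cons, hr, hr'] at hpq
  simp only [List.cons.injEq, List.cons_prefix_cons] at hpq
  grind

theorem label_comp_consEmbedding (hadj : G.Adj x w) (hw : w ∈ B) :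
    label ∘ consEmbedding hadj hw = label :=
  funext fun p => label_cons hadj hw p

end SPVertIn

variable [Fintype V]

/-- `ℓ(I(T - {paths with at most n vertices}))` for the stable-path tree `T` of `x` inside `B`;
`n = 0` gives `ℓ(I(T))` and `n = 1` gives `ℓ(I(T - root))`. -/
noncomputable def sptPoly (B : Set V) (x : V) (n : ℕ) : MvPolynomial V ℂ :=
  rename SPVertIn.label (Iav (SPTIn G B x) {p | p.1.length ≤ n})

theorem sptPoly_succ (B : Set V) (x : V) (n : ℕ) :
    sptPoly G B x (n + 1) = ∏ w ∈ nbrsIn G B x, sptPoly G (nextSet G B x w) w n := by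
  classical
  let ι := {w // G.Adj x w ∧ w ∈ B}
  let f (i : ι) := SPVertIn.consEmbedding i.2.1 i.2.2
  have hprod := Iav_eq_prod (SPTIn G B x) Finset.univ (fun i : ι => f i '' {q | q.1.length ≤ n}ᶜ)
    (T := {p | p.1.length ≤ n + 1}) ?_ ?_ ?_
  · rw [sptPoly, hprod, map_prod, Finset.prod_subtype (nbrsIn G B x) (fun _ => mem_nbrsIn G)]
    refine Finset.prod_congr rfl fun i _ => ?_
    rw [← rename_Iav, rename_rename, SPVertIn.label_comp_consEmbedding, sptPoly]
  · ext p
    simp only [Set.mem_compl_iff, Set.mem_ofPred_eq, not_le, Finset.mem_univ, Set.iUnion_true,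
      Set.mem_iUnion, Set.mem_image]
    constructor
    · intro hp
      obtain ⟨w, h, q, rfl⟩ := SPVertIn.exists_cons_eq (by omega : 2 ≤ p.1.length)
      exact ⟨⟨w, h⟩, q, by simpa using hp, rfl⟩
    · rintro ⟨i, q, hq, rfl⟩
      simpa [f] using hq
  · intro i _ j _ hij
    refine Set.disjoint_left.2 ?_
    rintro _ ⟨p, -, rfl⟩ ⟨q, -, hqp⟩
    exact hij (Subtype.ext (SPVertIn.eq_of_cons_eq_or_adj (h := j.2) (h' := i.2) (.inl hqp)).symm)
  · rintro i - j - hij _ ⟨p, -, rfl⟩ _ ⟨q, -, rfl⟩ hpq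
    exact hij (Subtype.ext (SPVertIn.eq_of_cons_eq_or_adj (h := i.2) (h' := j.2) (.inr hpq)))

theorem sptPoly_zero_eq_sub (B : Set V) (x : V) :
    sptPoly G B x 0 = sptPoly G B x 1 - X x * sptPoly G B x 2 := by
  have hroot : SPVertIn.root G B x ∉ {p : SPVertIn G B x | p.1.length ≤ 0} := by
    simp [SPVertIn.root]
  have h1 : insert (SPVertIn.root G B x) {p : SPVertIn G B x | p.1.length ≤ 0} =
      {p | p.1.length ≤ 1} := by
    ext p
    simp only [Set.mem_insert_iff, Set.mem_ofPred_eq, ← SPVertIn.length_le_one_iff]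
    omega
  have h2 : {p : SPVertIn G B x | p.1.length ≤ 1} ∪
      (SPTIn G B x).neighborSet (SPVertIn.root G B x) = {p | p.1.length ≤ 2} := by
    ext p
    simp only [Set.mem_union, Set.mem_ofPred_eq, SimpleGraph.mem_neighborSet, SPVertIn.adj_root_iff]
    omega
  rw [sptPoly, Iav_eq_sub_X_mul _ hroot, h1, h2, map_sub, map_mul, rename_X, SPVertIn.label_root]
  rfl

theorem sptPoly_zero (B : Set V) (x : V) :
    sptPoly G B x 0 = rename SPVertIn.label (Iav (SPTIn G B x) ∅) := by
  rw [sptPoly, Set.eq_empty_of_forall_notMem (s := {p : SPVertIn G B x | p.1.length ≤ 0})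
    fun p hp => by simpa using (SPVertIn.one_le_length p).trans hp]

theorem sptPoly_one (B : Set V) (x : V) :
    sptPoly G B x 1 = rename SPVertIn.label (Iav (SPTIn G B x) {SPVertIn.root G B x}) := by
  simp only [sptPoly, SPVertIn.length_le_one_iff, Set.ofPred_eq_eq_singleton]

theorem nextSet_eq_compIn (B : Set V) (x w : V) :
    nextSet G B x w = compIn G (B \ insert x ↑((nbrsIn G B x).filter (· < w))) w := by
  unfold nextSet
  congr 2
  ext z
  simp
  tauto

theorem Iav_mul_sptPoly_zero (B : Set V) {x : V} (hx : x ∈ B) :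
    Iav G (B \ {x})ᶜ * sptPoly G B x 0 = Iav G Bᶜ * sptPoly G B x 1 := by
  induction B using WellFoundedLT.induction generalizing x with
  | ind B ih =>
  set N := nbrsIn G B x
  have hstep : ∀ w ∈ N, Iav G (B \ insert x ↑(N.filter (· < w)))ᶜ * sptPoly G (nextSet G B x w) w 1
      = Iav G (B \ insert x ↑(N.filter (· ≤ w)))ᶜ * sptPoly G (nextSet G B x w) w 0 := by
    intro w hw
    obtain ⟨hadj, hwB⟩ := (mem_nbrsIn G).1 hw
    have hwD : w ∈ B \ insert x ↑(N.filter (· < w)) := by simp [hwB, hadj.ne']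
    have hDw : B \ insert x ↑(N.filter (· ≤ w)) = (B \ insert x ↑(N.filter (· < w))) \ {w} := by
      ext z
      simp only [Set.mem_sdiff, Set.mem_insert_iff, Finset.coe_filter, Set.mem_ofPred_eq,
        Set.mem_singleton_iff, N, mem_nbrsIn]
      grind
    rw [hDw]
    refine Iav_mul_eq_of_compIn G hwD ?_
    rw [← nextSet_eq_compIn]
    refine ih _ ((nextSet_subset G B x w).trans_ssubset (Set.sdiff_singleton_ssubset.2 hx)) ?_
    exact mem_nextSet_self G hadj hwB
  have htel := Finset.mul_prod_telescope N (fun S => Iav G (B \ insert x ↑S)ᶜ) _ _ hstep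
  have hdel := Iav_eq_sub_X_mul G (T := Bᶜ) (a := x) (by simpa)
  have hins : insert x Bᶜ = (B \ {x})ᶜ := by
    ext z; simp; tauto
  have hnbr : insert x Bᶜ ∪ G.neighborSet x = (B \ insert x ↑N)ᶜ := by
    ext z; simp [N]; tauto
  simp only [Finset.coe_empty, LawfulSingleton.insert_empty_eq] at htel
  rw [hnbr, hins] at hdel
  rw [sptPoly_zero_eq_sub, sptPoly_succ, sptPoly_succ, hdel]
  linear_combination (-X x) * htel

end StablePathTree

theorem stmt_12_general {V : Type*} [Fintype V] [LinearOrder V] (G : SimpleGraph V) (u : V) :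
    Iav G ({u} : Set V) *
        MvPolynomial.rename (SPTlabel : SPVert G u → V) (Iav (SPT G u) ∅) =
      Iav G (∅ : Set V) *
        MvPolynomial.rename (SPTlabel : SPVert G u → V)
          (Iav (SPT G u) ({SPTroot G u} : Set (SPVert G u))) := by
  have h := Iav_mul_sptPoly_zero G Set.univ (Set.mem_univ u)
  rw [Set.compl_sdiff, Set.compl_univ, Set.union_empty, sptPoly_zero, sptPoly_one] at h
  exact h

/-- The multivariate Godsil identity:
`I(G-u,x) · ℓ_G(I(T_G,x)) = I(G,x) · ℓ_G(I(T_G - u', x))`. -/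
theorem stmt_12 {V : Type*} [Fintype V] [LinearOrder V] (G : SimpleGraph V)
    (hG : G.Connected) (u : V) :
    Iav G ({u} : Set V) *
        MvPolynomial.rename (SPTlabel : SPVert G u → V) (Iav (SPT G u) ∅) =
      Iav G (∅ : Set V) *
        MvPolynomial.rename (SPTlabel : SPVert G u → V)
          (Iav (SPT G u) ({SPTroot G u} : Set (SPVert G u))) :=
  stmt_12_general G u
end
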